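/- (Theorem 2, super-Milne dimming.) Let λ_e ≤ λ_O be reals and E_O > 0. Let z, 𝕳, 𝕼, d_A, F : ℝ → ℝ satisfy on [λ_e, λ_O]: z differentiable with z' = −E_O(1+z)²𝕳, z(λ_O)=0, 1+z > 0; 𝕳 differentiable with 𝕳' = −E_O(1+z)𝕳²(1+𝕼) and 𝕳_O := 𝕳(λ_O) > 0; 𝕼𝕳² continuous; d_A twice continuously differentiable with d_A'' = −F·d_A, F continuous, F ≥ 0, d_A ≥ 0, d_A(λ_O)=0, d_A'(λ_O)=−E_O, and d_A nonincreasing on [λ_e, λ_O]. If λ ∈ [λ_e, λ_O] is such that E_O² · ∫_λ^{λ_O}∫_{λ'}^{λ_O} 𝕼(λ'')𝕳(λ'')² dλ'' dλ' ≤ −𝕳_O · d_A(λ) · (λ_O − λ) · ∫_λ^{λ_O} F(λ') dλ', then 𝕳_O · d_A(λ) ≥ (1/2)·(1 − (1+z(λ))^{−2}); that is, the angular diameter distance at redshift z(λ) is bounded below by that of the Milne universe model. -/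

import Mathlib

/-!
Both sides of the inequality are second-order Taylor expansions about the vertex `λ_O` with
integral remainder. Since `(𝕳/(1+z))' = -E_O 𝕼𝕳²` and the Milne distance
`(1 - (1+z)⁻²)/2` has derivative `-E_O 𝕳/(1+z)`, the Milne distance at `λ` equals
`E_O 𝕳_O (λ_O-λ) + E_O² ∫∫ 𝕼𝕳²`. The focusing equation gives
`d_A(λ) = E_O (λ_O-λ) - ∫∫ F d_A`, and because `d_A` decreases towards the vertex and `F ≥ 0`,
`∫∫ F d_A ≤ d_A(λ) (λ_O-λ) ∫ F`. Condition (16) is exactly what makes the remainders compare.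
-/

open intervalIntegral Set

/-- The angular diameter distance, in units of the Hubble length, of the Milne model. -/
noncomputable def milneDistance (z : ℝ) : ℝ := (1 - ((1 + z) ^ 2)⁻¹) / 2

@[simp] theorem milneDistance_zero : milneDistance 0 = 0 := by norm_num [milneDistance]

section Calculus

variable {f f' f'' g F : ℝ → ℝ} {a b : ℝ}

theorem intervalIntegrable_primitive_left (hab : a ≤ b) (hf : ContinuousOn f (Icc a b)) :
    IntervalIntegrable (fun s => ∫ u in s..b, f u) MeasureTheory.volume a b :=
  (continuousOn_primitive_interval_left (μ := MeasureTheory.volume)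
    (uIcc_of_le hab ▸ hf.integrableOn_Icc)).intervalIntegrable

theorem eq_sub_mul_add_integral_integral_of_hasDerivAt (hab : a ≤ b)
    (hf : ∀ x ∈ Icc a b, HasDerivAt f (f' x) x)
    (hf' : ∀ x ∈ Icc a b, HasDerivAt f' (f'' x) x) (hf'' : ContinuousOn f'' (Icc a b)) :
    f a = f b - f' b * (b - a) + ∫ s in a..b, ∫ u in s..b, f'' u := by
  have hf'_eq : ∀ s ∈ Icc a b, f' s = f' b - ∫ u in s..b, f'' u := by
    intro s hs
    have hsub : Icc s b ⊆ Icc a b := Icc_subset_Icc hs.1 le_rfl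
    have := integral_eq_sub_of_hasDerivAt (fun x hx => hf' x (hsub (uIcc_of_le hs.2 ▸ hx)))
      ((hf''.mono hsub).intervalIntegrable_of_Icc hs.2)
    linarith
  have hf_eq : ∫ s in a..b, f' s = f b - f a :=
    integral_eq_sub_of_hasDerivAt (fun x hx => hf x (uIcc_of_le hab ▸ hx))
      ((HasDerivAt.continuousOn hf').intervalIntegrable_of_Icc hab)
  rw [integral_congr (uIcc_of_le hab ▸ hf'_eq),
    integral_sub intervalIntegrable_const (intervalIntegrable_primitive_left hab hf''),
    integral_const, smul_eq_mul] at hf_eq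
  linarith

theorem integral_mul_le_of_antitoneOn (hF : ContinuousOn F (Icc a b))
    (hF₀ : ∀ x ∈ Icc a b, 0 ≤ F x) (hg : ContinuousOn g (Icc a b))
    (hg_anti : AntitoneOn g (Icc a b)) (hga : 0 ≤ g a) {s : ℝ} (hs : s ∈ Icc a b) :
    ∫ u in s..b, F u * g u ≤ g a * ∫ u in a..b, F u := by
  have hsub : Icc s b ⊆ Icc a b := Icc_subset_Icc hs.1 le_rfl
  have hFs : IntervalIntegrable F MeasureTheory.volume s b :=
    (hF.mono hsub).intervalIntegrable_of_Icc hs.2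
  have hFa : IntervalIntegrable F MeasureTheory.volume a s :=
    (hF.mono (Icc_subset_Icc le_rfl hs.2)).intervalIntegrable_of_Icc hs.1
  calc ∫ u in s..b, F u * g u ≤ ∫ u in s..b, F u * g a :=
        integral_mono_on hs.2 (((hF.mul hg).mono hsub).intervalIntegrable_of_Icc hs.2)
          (hFs.mul_const _) fun u hu =>
            mul_le_mul_of_nonneg_left
              (hg_anti ⟨le_rfl, hs.1.trans hs.2⟩ (hsub hu) (hs.1.trans hu.1)) (hF₀ u (hsub hu))
    _ = g a * ∫ u in s..b, F u := by rw [integral_mul_const, mul_comm]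
    _ ≤ g a * ∫ u in a..b, F u := by
        refine mul_le_mul_of_nonneg_left ?_ hga
        rw [← integral_add_adjacent_intervals hFa hFs, le_add_iff_nonneg_left]
        exact integral_nonneg hs.1 fun u hu => hF₀ u ⟨hu.1, hu.2.trans hs.2⟩

theorem integral_integral_mul_le_of_antitoneOn (hab : a ≤ b) (hF : ContinuousOn F (Icc a b))
    (hF₀ : ∀ x ∈ Icc a b, 0 ≤ F x) (hg : ContinuousOn g (Icc a b))
    (hg_anti : AntitoneOn g (Icc a b)) (hga : 0 ≤ g a) :
    ∫ s in a..b, ∫ u in s..b, F u * g u ≤ g a * (b - a) * ∫ u in a..b, F u := by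
  calc ∫ s in a..b, ∫ u in s..b, F u * g u ≤ ∫ _ in a..b, g a * ∫ u in a..b, F u :=
        integral_mono_on hab (intervalIntegrable_primitive_left hab (hF.mul hg))
          intervalIntegrable_const
          fun s hs => integral_mul_le_of_antitoneOn hF hF₀ hg hg_anti hga hs
    _ = g a * (b - a) * ∫ u in a..b, F u := by rw [integral_const, smul_eq_mul]; ring

end Calculus

section Redshift

variable {z H Q : ℝ → ℝ} {EO s : ℝ}

theorem hasDerivAt_hubble_div_one_add_redshift
    (hz : HasDerivAt z (-EO * (1 + z s) ^ 2 * H s) s)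
    (hH : HasDerivAt H (-EO * (1 + z s) * H s ^ 2 * (1 + Q s)) s) (hzs : 1 + z s ≠ 0) :
    HasDerivAt (fun u => H u / (1 + z u)) (-(EO * (Q s * H s ^ 2))) s := by
  refine (hH.div (hz.const_add 1) hzs).congr_deriv ?_
  field_simp
  ring

theorem hasDerivAt_milneDistance_comp
    (hz : HasDerivAt z (-EO * (1 + z s) ^ 2 * H s) s) (hzs : 1 + z s ≠ 0) :
    HasDerivAt (fun u => milneDistance (z u)) (-(EO * (H s / (1 + z s)))) s := by
  refine ((((hz.const_add 1).pow 2).inv (pow_ne_zero 2 hzs)).const_sub 1 |>.div_const 2)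
    |>.congr_deriv ?_
  simp only [Pi.pow_apply]
  field_simp
  ring

theorem milneDistance_eq_integral_integral {a b : ℝ} (hab : a ≤ b)
    (hz : ∀ x ∈ Icc a b, HasDerivAt z (-EO * (1 + z x) ^ 2 * H x) x) (hzb : z b = 0)
    (hzpos : ∀ x ∈ Icc a b, 0 < 1 + z x)
    (hH : ∀ x ∈ Icc a b, HasDerivAt H (-EO * (1 + z x) * H x ^ 2 * (1 + Q x)) x)
    (hQH : ContinuousOn (fun x => Q x * H x ^ 2) (Icc a b)) :
    milneDistance (z a)
      = EO * H b * (b - a) + EO ^ 2 * ∫ s in a..b, ∫ u in s..b, Q u * H u ^ 2 := by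
  have := eq_sub_mul_add_integral_integral_of_hasDerivAt hab
    (fun x hx => hasDerivAt_milneDistance_comp (hz x hx) (hzpos x hx).ne')
    (fun x hx => ((hasDerivAt_hubble_div_one_add_redshift (hz x hx) (hH x hx)
      (hzpos x hx).ne').const_mul EO).neg.congr_deriv (by ring : _ = EO ^ 2 * _))
    (hQH.const_smul (EO ^ 2))
  simp only [integral_const_mul, hzb, milneDistance_zero] at this
  linarith

end Redshift

theorem eq_sub_integral_integral_of_focusing {dA dA' F : ℝ → ℝ} {EO a b : ℝ} (hab : a ≤ b)
    (hdA : ∀ x ∈ Icc a b, HasDerivAt dA (dA' x) x)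
    (hfocus : ∀ x ∈ Icc a b, HasDerivAt dA' (-(F x) * dA x) x) (hF : ContinuousOn F (Icc a b))
    (hvertex : dA b = 0) (hslope : dA' b = -EO) :
    dA a = EO * (b - a) - ∫ s in a..b, ∫ u in s..b, F u * dA u := by
  have := eq_sub_mul_add_integral_integral_of_hasDerivAt hab hdA hfocus
    ((hF.mul (HasDerivAt.continuousOn hdA)).neg.congr fun _ _ => neg_mul ..)
  simp only [neg_mul, integral_neg, hvertex, hslope] at this
  linarith

theorem super_Milne_dimming_general
    (lamE lamO : ℝ)
    (EO : ℝ)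
    (z H Q dA dA' F : ℝ → ℝ)
    (hz : ∀ lam ∈ Set.Icc lamE lamO,
      HasDerivAt z (-EO * (1 + z lam) ^ 2 * H lam) lam)
    (hzO : z lamO = 0)
    (hzpos : ∀ lam ∈ Set.Icc lamE lamO, 0 < 1 + z lam)
    (hH : ∀ lam ∈ Set.Icc lamE lamO,
      HasDerivAt H (-EO * (1 + z lam) * (H lam) ^ 2 * (1 + Q lam)) lam)
    (hHO : 0 < H lamO)
    (hQH : ContinuousOn (fun lam => Q lam * (H lam) ^ 2) (Set.Icc lamE lamO))
    (hdA : ∀ lam ∈ Set.Icc lamE lamO, HasDerivAt dA (dA' lam) lam)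
    (hfocus : ∀ lam ∈ Set.Icc lamE lamO, HasDerivAt dA' (-(F lam) * dA lam) lam)
    (hF : ContinuousOn F (Set.Icc lamE lamO))
    (hFpos : ∀ lam ∈ Set.Icc lamE lamO, 0 ≤ F lam)
    (hvertex : dA lamO = 0)
    (hslope : dA' lamO = -EO)
    (hmono : ∀ a ∈ Set.Icc lamE lamO, ∀ b ∈ Set.Icc lamE lamO,
      a ≤ b → dA b ≤ dA a)
    (lam : ℝ) (hlam : lam ∈ Set.Icc lamE lamO)
    (hcond : EO ^ 2 * ∫ lam' in lam..lamO, ∫ lam'' in lam'..lamO,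
        Q lam'' * (H lam'') ^ 2
      ≤ -(H lamO) * dA lam * (lamO - lam) * ∫ lam' in lam..lamO, F lam') :
    H lamO * dA lam ≥ (1 - ((1 + z lam) ^ 2)⁻¹) / 2 := by
  have hsub : Icc lam lamO ⊆ Icc lamE lamO := Icc_subset_Icc hlam.1 le_rfl
  have hmilne := milneDistance_eq_integral_integral hlam.2 (fun x hx => hz x (hsub hx)) hzO
    (fun x hx => hzpos x (hsub hx)) (fun x hx => hH x (hsub hx)) (hQH.mono hsub)
  have hdist := eq_sub_integral_integral_of_focusing hlam.2 (fun x hx => hdA x (hsub hx))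
    (fun x hx => hfocus x (hsub hx)) (hF.mono hsub) hvertex hslope
  have hfocusing := integral_integral_mul_le_of_antitoneOn hlam.2 (hF.mono hsub)
    (fun x hx => hFpos x (hsub hx)) (HasDerivAt.continuousOn fun x hx => hdA x (hsub hx))
    (fun a ha b hb => hmono a (hsub ha) b (hsub hb))
    (hvertex ▸ hmono lam hlam lamO ⟨hlam.1.trans hlam.2, le_rfl⟩ hlam.2)
  show milneDistance (z lam) ≤ H lamO * dA lam
  calc milneDistance (z lam)
      ≤ H lamO * (EO * (lamO - lam) - dA lam * (lamO - lam) * ∫ u in lam..lamO, F u) := by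
        rw [hmilne]; linarith
    _ ≤ H lamO * (EO * (lamO - lam) - ∫ s in lam..lamO, ∫ u in s..lamO, F u * dA u) :=
        mul_le_mul_of_nonneg_left (by linarith) hHO.le
    _ = H lamO * dA lam := by rw [hdist]

/-- Theorem 2 of the paper (super-Milne dimming): in a general-relativistic
spacetime obeying the null energy condition, with `𝕳_O > 0`, if the cleared
form of condition (16) holds at `λ`, namely
`E_O² ∫∫ 𝕼𝕳² ≤ −𝕳_O d_A(λ)(λ_O−λ)∫F`, then the angular diameter distance at
redshift `z(λ)` is bounded below by that of the Milne universe model: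
`𝕳_O d_A ≥ (1 − (1+z)⁻²)/2`. -/
theorem super_Milne_dimming
    (lamE lamO : ℝ) (hle : lamE ≤ lamO)
    (EO : ℝ) (hEO : 0 < EO)
    (z H Q dA dA' F : ℝ → ℝ)
    (hz : ∀ lam ∈ Set.Icc lamE lamO,
      HasDerivAt z (-EO * (1 + z lam) ^ 2 * H lam) lam)
    (hzO : z lamO = 0)
    (hzpos : ∀ lam ∈ Set.Icc lamE lamO, 0 < 1 + z lam)
    (hH : ∀ lam ∈ Set.Icc lamE lamO,
      HasDerivAt H (-EO * (1 + z lam) * (H lam) ^ 2 * (1 + Q lam)) lam)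
    (hHO : 0 < H lamO)
    (hQH : ContinuousOn (fun lam => Q lam * (H lam) ^ 2) (Set.Icc lamE lamO))
    (hdA : ∀ lam ∈ Set.Icc lamE lamO, HasDerivAt dA (dA' lam) lam)
    (hfocus : ∀ lam ∈ Set.Icc lamE lamO, HasDerivAt dA' (-(F lam) * dA lam) lam)
    (hF : ContinuousOn F (Set.Icc lamE lamO))
    (hFpos : ∀ lam ∈ Set.Icc lamE lamO, 0 ≤ F lam)
    (hdApos : ∀ lam ∈ Set.Icc lamE lamO, 0 ≤ dA lam)
    (hvertex : dA lamO = 0)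
    (hslope : dA' lamO = -EO)
    (hmono : ∀ a ∈ Set.Icc lamE lamO, ∀ b ∈ Set.Icc lamE lamO,
      a ≤ b → dA b ≤ dA a)
    (lam : ℝ) (hlam : lam ∈ Set.Icc lamE lamO)
    (hcond : EO ^ 2 * ∫ lam' in lam..lamO, ∫ lam'' in lam'..lamO,
        Q lam'' * (H lam'') ^ 2
      ≤ -(H lamO) * dA lam * (lamO - lam) * ∫ lam' in lam..lamO, F lam') :
    H lamO * dA lam ≥ (1 - ((1 + z lam) ^ 2)⁻¹) / 2 :=
  super_Milne_dimming_general lamE lamO EO z H Q dA dA' F hz hzO hzpos hH hHO hQH hdA hfocus hF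
    hFpos hvertex hslope hmono lam hlam hcond
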